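/- Along trajectories of ė = A_r e + b k_p k̃_xᵀ x + b k_p k̃_r r − b k_p θ̃ᵀ φ and the combined adaptation error dynamics with η = 1: k̃_x' = −x eᵀP b k_p' − k̃_x |k_p| bᵀb, k̃_r' = −r eᵀP b k_p' − k̃_r |k_p| bᵀb, θ̃' = φ eᵀP b k_p' − θ̃ |k_p| bᵀb, the derivative of V = eᵀP e + |k_p|(‖k̃_x‖² + k̃_r² + ‖θ̃‖²) satisfies V̇ ≤ −λ_min(Q)‖e‖² − 2|k_p|² bᵀb (‖k̃_x‖² + k̃_r² + ‖θ̃‖²), where A_rᵀP + P A_r + Q = 0. -/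

import Mathlib

/-!
The derivative of `V` is computed exactly. The Lyapunov equation turns `2 eᵀ P A_r e` into
`-eᵀ Q e`; the adaptation laws are built so that the cross terms
`± 2 k_p (eᵀ P b) (k̃ₓᵀ x + k̃_r r - θ̃ᵀ φ)` cancel, because `|k_p| sign k_p = k_p`; the leakage
terms contribute exactly `-2 |k_p|² bᵀb (‖k̃ₓ‖² + k̃_r² + ‖θ̃‖²)`. It remains to bound `eᵀ Q e`
below by `λ_min(Q) ‖e‖²`, which follows from the spectral theorem: `Q - λ_min(Q) • 1` is
positive semidefinite.
-/

open Matrix Unitary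
open scoped ComplexOrder

section Derivatives
variable {𝕜 : Type*} [NontriviallyNormedField 𝕜] {n : Type*} [Fintype n]
  {f g : 𝕜 → n → 𝕜} {f' g' : n → 𝕜} {t : 𝕜}

theorem HasDerivAt.dotProduct (hf : HasDerivAt f f' t) (hg : HasDerivAt g g' t) :
    HasDerivAt (fun s => f s ⬝ᵥ g s) (f' ⬝ᵥ g t + f t ⬝ᵥ g') t := by
  simp only [_root_.dotProduct, ← Finset.sum_add_distrib]
  exact HasDerivAt.fun_sum fun i _ => by
    simpa [mul_comm] using (hasDerivAt_pi.mp hf i).fun_mul (hasDerivAt_pi.mp hg i)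

theorem HasDerivAt.dotProduct_self (hf : HasDerivAt f f' t) :
    HasDerivAt (fun s => f s ⬝ᵥ f s) (2 * (f t ⬝ᵥ f')) t := by
  simpa [dotProduct_comm f', two_mul] using hf.dotProduct hf

theorem HasDerivAt.mulVec {m : Type*} [Fintype m] (M : Matrix m n 𝕜) (hf : HasDerivAt f f' t) :
    HasDerivAt (fun s => M *ᵥ f s) (M *ᵥ f') t :=
  hasDerivAt_pi.mpr fun _ => HasDerivAt.fun_sum fun j _ => (hasDerivAt_pi.mp hf j).const_mul _

theorem HasDerivAt.dotProduct_mulVec_self {P : Matrix n n 𝕜} (hP : P.IsSymm)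
    (hf : HasDerivAt f f' t) :
    HasDerivAt (fun s => f s ⬝ᵥ P *ᵥ f s) (2 * (f t ⬝ᵥ P *ᵥ f')) t := by
  convert hf.dotProduct (hf.mulVec P) using 1
  rw [dotProduct_mulVec f', ← mulVec_transpose, hP.eq, dotProduct_comm, two_mul]

end Derivatives

theorem Real.abs_mul_sign (r : ℝ) : |r| * Real.sign r = r := by
  obtain hr | rfl | hr := lt_trichotomy r 0
  · rw [abs_of_neg hr, Real.sign_of_neg hr, neg_mul_neg, mul_one]
  · rw [abs_zero, zero_mul]
  · rw [abs_of_pos hr, Real.sign_of_pos hr, mul_one]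

theorem Matrix.IsSymm.two_mul_dotProduct_mulVec_mulVec_of_lyapunov {R n : Type*} [CommRing R]
    [Fintype n] {A P Q : Matrix n n R} (hP : P.IsSymm) (hly : Aᵀ * P + P * A + Q = 0)
    (v : n → R) : 2 * (v ⬝ᵥ P *ᵥ (A *ᵥ v)) = -(v ⬝ᵥ Q *ᵥ v) := by
  have hsum : v ⬝ᵥ (Aᵀ * P + P * A + Q) *ᵥ v = 0 := by simp [hly]
  have hswap : v ⬝ᵥ (Aᵀ * P) *ᵥ v = v ⬝ᵥ (P * A) *ᵥ v := by
    rw [dotProduct_mulVec, ← mulVec_transpose, dotProduct_comm, transpose_mul, transpose_transpose,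
      hP.eq]
  rw [add_mulVec, add_mulVec, dotProduct_add, dotProduct_add, hswap, ← mulVec_mulVec] at hsum
  linear_combination hsum

theorem Matrix.IsHermitian.iInf_eigenvalues_mul_le {𝕜 n : Type*} [RCLike 𝕜] [Fintype n]
    [DecidableEq n] {A : Matrix n n 𝕜} (hA : A.IsHermitian) (x : n → 𝕜) :
    (⨅ i, hA.eigenvalues i) * RCLike.re (star x ⬝ᵥ x) ≤ RCLike.re (star x ⬝ᵥ A *ᵥ x) := by
  set c := ⨅ i, hA.eigenvalues i
  have hshift : (A - (c : 𝕜) • 1).PosSemidef := by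
    rw [← Algebra.algebraMap_eq_smul_one, hA.spectral_theorem,
      ← AlgEquiv.commutes (conjStarAlgAut 𝕜 _ hA.eigenvectorUnitary).toAlgEquiv,
      StarAlgEquiv.coe_toAlgEquiv, ← map_sub, conjStarAlgAut_apply,
      isUnit_coe.posSemidef_star_right_conjugate_iff, algebraMap_eq_diagonal, diagonal_sub,
      posSemidef_diagonal_iff]
    intro i
    simp only [Function.comp_apply, Pi.algebraMap_apply, Algebra.algebraMap_self,
      RingHom.id_apply, sub_nonneg]
    exact_mod_cast ciInf_le (Finite.bddBelow_range hA.eigenvalues) i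
  simpa [sub_mulVec, smul_mulVec, dotProduct_sub, sub_nonneg, RCLike.smul_re] using
    hshift.re_dotProduct_nonneg x

theorem stmt_9_general {n p : ℕ} (Ar P Q : Matrix (Fin n) (Fin n) ℝ)
    (hP : P.PosDef) (hQ : Q.PosDef)
    (hly : Arᵀ * P + P * Ar + Q = 0)
    (b : Fin n → ℝ)
    (kp kp' : ℝ) (hkp' : kp' = Real.sign kp)
    (e x ktx : ℝ → (Fin n → ℝ)) (ktr r : ℝ → ℝ) (θt φv : ℝ → (Fin p → ℝ))
    (t : ℝ)
    (he : HasDerivAt e (Ar *ᵥ e t + (kp * (ktx t ⬝ᵥ x t)) • b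
        + (kp * ktr t * r t) • b - (kp * (θt t ⬝ᵥ φv t)) • b) t)
    (hktx : HasDerivAt ktx
      (-(((e t ⬝ᵥ P *ᵥ b) * kp') • x t) - (|kp| * (b ⬝ᵥ b)) • ktx t) t)
    (hktr : HasDerivAt ktr
      (-(r t * (e t ⬝ᵥ P *ᵥ b) * kp') - |kp| * (b ⬝ᵥ b) * ktr t) t)
    (hθt : HasDerivAt θt
      (((e t ⬝ᵥ P *ᵥ b) * kp') • φv t - (|kp| * (b ⬝ᵥ b)) • θt t) t) :
    deriv (fun s => e s ⬝ᵥ P *ᵥ e s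
        + |kp| * (ktx s ⬝ᵥ ktx s + (ktr s) ^ 2 + θt s ⬝ᵥ θt s)) t ≤
      -(⨅ i, hQ.1.eigenvalues i) * (e t ⬝ᵥ e t)
        - 2 * |kp| ^ 2 * (b ⬝ᵥ b) *
          (ktx t ⬝ᵥ ktx t + (ktr t) ^ 2 + θt t ⬝ᵥ θt t) := by
  have hPsymm : P.IsSymm := isHermitian_iff_isSymm.mp hP.1
  have hlyap := hPsymm.two_mul_dotProduct_mulVec_mulVec_of_lyapunov hly (e t)
  have hsign : |kp| * kp' = kp := hkp' ▸ Real.abs_mul_sign kp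
  have hV : HasDerivAt (fun s => e s ⬝ᵥ P *ᵥ e s
        + |kp| * (ktx s ⬝ᵥ ktx s + (ktr s) ^ 2 + θt s ⬝ᵥ θt s))
      (-(e t ⬝ᵥ Q *ᵥ e t) - 2 * |kp| ^ 2 * (b ⬝ᵥ b) *
          (ktx t ⬝ᵥ ktx t + (ktr t) ^ 2 + θt t ⬝ᵥ θt t)) t := by
    refine ((he.dotProduct_mulVec_self hPsymm).fun_add
      (((hktx.dotProduct_self.fun_add (hktr.fun_pow 2)).fun_add
        hθt.dotProduct_self).const_mul |kp|)).congr_deriv ?_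
    simp only [mulVec_add, mulVec_sub, mulVec_smul, dotProduct_add, dotProduct_sub,
      dotProduct_smul, dotProduct_neg, smul_eq_mul, dotProduct_comm (ktx t) (x t),
      dotProduct_comm (θt t) (φv t)]
    linear_combination hlyap - 2 * (e t ⬝ᵥ P *ᵥ b) *
      (x t ⬝ᵥ ktx t + ktr t * r t - φv t ⬝ᵥ θt t) * hsign
  rw [hV.deriv]
  have hRayleigh := hQ.1.iInf_eigenvalues_mul_le (e t)
  simp only [star_trivial, RCLike.re_to_real] at hRayleigh
  linarith

/-- along the tracking-error dynamics and the combined adaptation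
error dynamics (with `η = 1`), the Lyapunov derivative satisfies
`V̇ ≤ -λ_min(Q)‖e‖² - 2|k_p|² bᵀb (‖k̃_x‖² + k̃_r² + ‖θ̃‖²)`. -/
theorem stmt_9 {n p : ℕ} (Ar P Q : Matrix (Fin n) (Fin n) ℝ)
    (hP : P.PosDef) (hQ : Q.PosDef)
    (hly : Arᵀ * P + P * Ar + Q = 0)
    (b : Fin n → ℝ) (hb : 0 < b ⬝ᵥ b)
    (kp kp' : ℝ) (hkp : kp ≠ 0) (hkp' : kp' = Real.sign kp)
    (e x ktx : ℝ → (Fin n → ℝ)) (ktr r : ℝ → ℝ) (θt φv : ℝ → (Fin p → ℝ))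
    (t : ℝ)
    (he : HasDerivAt e (Ar *ᵥ e t + (kp * (ktx t ⬝ᵥ x t)) • b
        + (kp * ktr t * r t) • b - (kp * (θt t ⬝ᵥ φv t)) • b) t)
    (hktx : HasDerivAt ktx
      (-(((e t ⬝ᵥ P *ᵥ b) * kp') • x t) - (|kp| * (b ⬝ᵥ b)) • ktx t) t)
    (hktr : HasDerivAt ktr
      (-(r t * (e t ⬝ᵥ P *ᵥ b) * kp') - |kp| * (b ⬝ᵥ b) * ktr t) t)
    (hθt : HasDerivAt θt
      (((e t ⬝ᵥ P *ᵥ b) * kp') • φv t - (|kp| * (b ⬝ᵥ b)) • θt t) t) :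
    deriv (fun s => e s ⬝ᵥ P *ᵥ e s
        + |kp| * (ktx s ⬝ᵥ ktx s + (ktr s) ^ 2 + θt s ⬝ᵥ θt s)) t ≤
      -(⨅ i, hQ.1.eigenvalues i) * (e t ⬝ᵥ e t)
        - 2 * |kp| ^ 2 * (b ⬝ᵥ b) *
          (ktx t ⬝ᵥ ktx t + (ktr t) ^ 2 + θt t ⬝ᵥ θt t) :=
  stmt_9_general Ar P Q hP hQ hly b kp kp' hkp' e x ktx ktr r θt φv t he hktx hktr hθt
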